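/- For every real number α with 0 < α < 1, the sequence n ↦ p n ⌈α·n⌉ converges to √2/4 as n → ∞; that is, from a starting site a fixed proportion of the way into the lattice, the probability of absorption at the left barrier tends to √2/4 ≈ 0.35355. -/

import Mathlib

/-!
Since the exponents satisfy `(n - j) + (j - 1) = n - 1`, dividing numerator and denominator of
`p n j` by `A ^ (n - 1)` turns it into a rational expression in powers of `r = B / A ∈ (0, 1)`
with exponents `j - 1`, `n - j` and `n - 1`. For `j = ⌈α n⌉` all three exponents tend to
infinity, so every power of `r` vanishes in the limit and only the constant `√2 / 4` survives.
-/

noncomputable def A : ℝ := 2 + Real.sqrt 2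
noncomputable def B : ℝ := 2 - Real.sqrt 2

/-- The absorption probability of the two-barrier Hadamard quantum walk on `{0,…,n}`
started at site `j`, given by the explicit formula of Bach–Borisov. -/
noncomputable def p (n j : ℕ) : ℝ :=
  (Real.sqrt 2 / 4) * ((A ^ (n - j) - B ^ (n - j)) * (A ^ (j - 1) + B ^ (j - 1))) /
    (A ^ (n - 1) + B ^ (n - 1))

open Filter Topology

lemma A_pos : 0 < A := by unfold A; positivity

lemma B_pos : 0 < B := by
  unfold B
  nlinarith [Real.sq_sqrt (zero_le_two : (0 : ℝ) ≤ 2), Real.sqrt_nonneg 2]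

lemma B_lt_A : B < A := by
  unfold A B
  linarith [Real.sqrt_pos.2 (zero_lt_two : (0 : ℝ) < 2)]

lemma p_eq_pow_B_div_A {n j : ℕ} (hj : 1 ≤ j) (hjn : j ≤ n) :
    p n j = Real.sqrt 2 / 4 * (1 + (B / A) ^ (j - 1) - (B / A) ^ (n - j) - (B / A) ^ (n - 1)) /
      (1 + (B / A) ^ (n - 1)) := by
  have hA := A_pos.ne'
  have hAB := (add_pos A_pos B_pos).ne'
  rw [p, show n - 1 = (n - j) + (j - 1) by omega]
  generalize n - j = a, j - 1 = b
  rw [div_pow, div_pow, div_pow, pow_add, pow_add]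
  field_simp
  ring

lemma ceil_mul_le_self {α : ℝ} (hα : α ≤ 1) (n : ℕ) : ⌈α * n⌉₊ ≤ n :=
  Nat.ceil_le.2 (mul_le_of_le_one_left n.cast_nonneg hα)

lemma tendsto_ceil_mul_sub_one_atTop {α : ℝ} (hα : 0 < α) :
    Tendsto (fun n : ℕ => ⌈α * n⌉₊ - 1) atTop atTop :=
  (tendsto_sub_atTop_nat 1).comp <|
    tendsto_nat_ceil_atTop.comp <| tendsto_natCast_atTop_atTop.const_mul_atTop hα

lemma tendsto_sub_ceil_mul_atTop {α : ℝ} (hα : α < 1) :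
    Tendsto (fun n : ℕ => n - ⌈α * n⌉₊) atTop atTop := by
  set β := max α 0
  have hβ : 0 < 1 - β := sub_pos.2 (max_lt hα one_pos)
  rw [← tendsto_natCast_atTop_iff (R := ℝ)]
  refine tendsto_atTop_mono (fun n : ℕ => ?_) <| tendsto_atTop_add_const_right _ (-1) <|
    tendsto_natCast_atTop_atTop.const_mul_atTop hβ
  have hceil : (⌈α * n⌉₊ : ℝ) < β * n + 1 :=
    (Nat.cast_le.2 (Nat.ceil_mono (by gcongr; exact le_max_left α 0))).trans_lt
      (Nat.ceil_lt_add_one (by positivity))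
  have hsub : (n : ℝ) ≤ ((n - ⌈α * n⌉₊ : ℕ) : ℝ) + ⌈α * n⌉₊ := by exact_mod_cast le_tsub_add
  linarith

/-- From a starting site a fixed proportion `α` of the way into the lattice, the
probability of absorption at the left barrier tends to `√2/4` as `n → ∞`. -/
theorem p_interior_tendsto (α : ℝ) (h0 : 0 < α) (h1 : α < 1) :
    Filter.Tendsto (fun n : ℕ => p n ⌈α * n⌉₊) Filter.atTop (nhds (Real.sqrt 2 / 4)) := by
  have hr : Tendsto (fun k : ℕ => (B / A) ^ k) atTop (𝓝 0) :=
    tendsto_pow_atTop_nhds_zero_of_lt_one (div_pos B_pos A_pos).le ((div_lt_one A_pos).2 B_lt_A)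
  have hj := hr.comp (tendsto_ceil_mul_sub_one_atTop h0)
  have hnj := hr.comp (tendsto_sub_ceil_mul_atTop h1)
  have hn := hr.comp (tendsto_sub_atTop_nat 1)
  have hlim : Tendsto (fun n : ℕ => Real.sqrt 2 / 4 *
      (1 + (B / A) ^ (⌈α * n⌉₊ - 1) - (B / A) ^ (n - ⌈α * n⌉₊) - (B / A) ^ (n - 1)) /
        (1 + (B / A) ^ (n - 1))) atTop (𝓝 (Real.sqrt 2 / 4 * (1 + 0 - 0 - 0) / (1 + 0))) :=
    (tendsto_const_nhds.mul (((tendsto_const_nhds.add hj).sub hnj).sub hn)).div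
      (tendsto_const_nhds.add hn) (by norm_num)
  rw [add_zero, sub_zero, sub_zero, mul_one, div_one] at hlim
  refine hlim.congr' ?_
  filter_upwards [eventually_gt_atTop 0] with n hn
  exact (p_eq_pow_B_div_A (Nat.one_le_ceil_iff.2 (mul_pos h0 (Nat.cast_pos.2 hn)))
    (ceil_mul_le_self h1.le n)).symm
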